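/- Let R be a ring and n a non-negative integer. A right R-module M is n-weak flat if and only if its character module M* = Hom_ℤ(M, ℚ/ℤ) is an n-weak injective left R-module. -/

import Mathlib

/-! Definitions for `n`-weak injective and `n`-weak flat modules over an arbitrary
(associative, unital, possibly noncommutative) ring `R`, following
Amini–Amzil–Bennis, "On n-weak injective and n-weak flat modules".

Left `R`-modules are types with `[Module R M]`; right `R`-modules are types with
`[Module Rᵐᵒᵖ M]`.  `Ext` is the derived functor of the ℤ-linear Yoneda functor on
`ModuleCat R`, and `Tor` is obtained as the left derived functor of the balanced
tensor product `N ⊗_R -` (constructed as a quotient of the ℤ-tensor product). -/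

open CategoryTheory Limits TensorProduct

noncomputable section

universe u

namespace NWeak

variable (R : Type u) [Ring R]

/-- A left `R`-module `U` is *`n`-super finitely presented* if it admits a resolution
`⋯ → F_{n+1} → F_n → ⋯ → F_1 → F_0 → U → 0` by projective modules in which `F_i` is
finitely generated for every `i ≥ n`. -/
def IsNSuperFP (n : ℕ) (U : Type u) [AddCommGroup U] [Module R U] : Prop :=
  ∃ (F : ℕ → ModuleCat.{u} R) (d : ∀ i, F (i + 1) ⟶ F i) (ε : F 0 →ₗ[R] U),
    (∀ i, Module.Projective R (F i)) ∧
    (∀ i, n ≤ i → Module.Finite R (F i)) ∧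
    Function.Surjective ε ∧
    Function.Exact (d 0) ε ∧
    (∀ i, Function.Exact (d (i + 1)) (d i))

/-- A left `R`-module `K` is *special super finitely presented* (relative to `n`) if
there are an `n`-super finitely presented module `U` and a resolution
`⋯ → F_{n+1} → F_n → ⋯ → F_0 → U → 0` as above such that `K ≅ Im (F_n → F_{n-1})`,
where for `n = 0` we read `K_{-1} := U`. -/
def IsSpecialSFP (n : ℕ) (K : Type u) [AddCommGroup K] [Module R K] : Prop :=
  ∃ (F : ℕ → ModuleCat.{u} R) (d : ∀ i, F (i + 1) ⟶ F i) (U : ModuleCat.{u} R)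
    (ε : F 0 ⟶ U),
    (∀ i, Module.Projective R (F i)) ∧
    (∀ i, n ≤ i → Module.Finite R (F i)) ∧
    Function.Surjective ε ∧
    Function.Exact (d 0) ε ∧
    (∀ i, Function.Exact (d (i + 1)) (d i)) ∧
    (match n with
      | 0 => Nonempty (K ≃ₗ[R] U)
      | m + 1 => Nonempty (K ≃ₗ[R] LinearMap.range (d m).hom))

/-- Vanishing of `Ext_R^i(K, M)` for left `R`-modules. -/
def extVanish (i : ℕ) (K : Type u) [AddCommGroup K] [Module R K]
    (M : Type u) [AddCommGroup M] [Module R M] : Prop :=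
  Subsingleton (((Ext ℤ (ModuleCat.{u} R) i).obj
    (Opposite.op (ModuleCat.of R K))).obj (ModuleCat.of R M))

/-- A left `R`-module `M` is *`n`-weak injective* if `Ext_R^{n+1}(U, M) = 0` for every
`n`-super finitely presented left `R`-module `U`. -/
def IsNWeakInjective (n : ℕ) (M : Type u) [AddCommGroup M] [Module R M] : Prop :=
  ∀ (U : ModuleCat.{u} R), IsNSuperFP R n U → extVanish R (n + 1) U M

/-- The left `R`-module `M` has *`n`-weak injective dimension at most `k`* if
`Ext_R^{k+1}(K, M) = 0` for every special super finitely presented left `R`-module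
`K`. -/
def WIDimLE (n k : ℕ) (M : Type u) [AddCommGroup M] [Module R M] : Prop :=
  ∀ (K : ModuleCat.{u} R), IsSpecialSFP R n K → extVanish R (k + 1) K M

/-! ### The balanced tensor product and Tor -/

/-- The additive subgroup of `N ⊗[ℤ] K` generated by the balancing relations
`(n·r) ⊗ k - n ⊗ (r·k)`. -/
def balRel (N : Type u) [AddCommGroup N] [Module Rᵐᵒᵖ N]
    (K : Type u) [AddCommGroup K] [Module R K] : AddSubgroup (N ⊗[ℤ] K) :=
  AddSubgroup.closure
    {x | ∃ (a : N) (r : R) (b : K),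
      x = (MulOpposite.op r • a) ⊗ₜ[ℤ] b - a ⊗ₜ[ℤ] (r • b)}

/-- The balanced tensor product `N ⊗_R K` of a right `R`-module `N` and a left
`R`-module `K`, realized as a quotient of `N ⊗[ℤ] K`. -/
def RTensor (N : Type u) [AddCommGroup N] [Module Rᵐᵒᵖ N]
    (K : Type u) [AddCommGroup K] [Module R K] : Type u :=
  (N ⊗[ℤ] K) ⧸ balRel R N K

instance (N : Type u) [AddCommGroup N] [Module Rᵐᵒᵖ N]
    (K : Type u) [AddCommGroup K] [Module R K] : AddCommGroup (RTensor R N K) :=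
  inferInstanceAs (AddCommGroup ((N ⊗[ℤ] K) ⧸ balRel R N K))

variable {R}

/-- Functoriality of the balanced tensor product in the left-module variable. -/
def balMapRight (N : Type u) [AddCommGroup N] [Module Rᵐᵒᵖ N]
    {K K' : Type u} [AddCommGroup K] [Module R K] [AddCommGroup K'] [Module R K']
    (f : K →ₗ[R] K') : RTensor R N K →+ RTensor R N K' :=
  QuotientAddGroup.map _ _
    (TensorProduct.map (LinearMap.id : N →ₗ[ℤ] N) (f.restrictScalars ℤ)).toAddMonoidHom
    (by
      rw [balRel, AddSubgroup.closure_le]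
      rintro x ⟨a, r, b, rfl⟩
      simp only [SetLike.mem_coe, AddSubgroup.mem_comap, LinearMap.toAddMonoidHom_coe,
        map_sub, TensorProduct.map_tmul, LinearMap.coe_restrictScalars, LinearMap.id_coe,
        id_eq, LinearMap.map_smul]
      exact AddSubgroup.subset_closure ⟨a, r, f b, rfl⟩)

/-- Functoriality of the balanced tensor product in the right-module variable. -/
def balMapLeft (K : Type u) [AddCommGroup K] [Module R K]
    {N N' : Type u} [AddCommGroup N] [Module Rᵐᵒᵖ N] [AddCommGroup N'] [Module Rᵐᵒᵖ N']
    (g : N →ₗ[Rᵐᵒᵖ] N') : RTensor R N K →+ RTensor R N' K :=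
  QuotientAddGroup.map _ _
    (TensorProduct.map (g.restrictScalars ℤ) (LinearMap.id : K →ₗ[ℤ] K)).toAddMonoidHom
    (by
      rw [balRel, AddSubgroup.closure_le]
      rintro x ⟨a, r, b, rfl⟩
      simp only [SetLike.mem_coe, AddSubgroup.mem_comap, LinearMap.toAddMonoidHom_coe,
        map_sub, TensorProduct.map_tmul, LinearMap.coe_restrictScalars, LinearMap.id_coe,
        id_eq, LinearMap.map_smul]
      exact AddSubgroup.subset_closure ⟨g a, r, b, rfl⟩)

lemma balMapRight_mk (N : Type u) [AddCommGroup N] [Module Rᵐᵒᵖ N]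
    {K K' : Type u} [AddCommGroup K] [Module R K] [AddCommGroup K'] [Module R K']
    (f : K →ₗ[R] K') (y : N ⊗[ℤ] K) :
    balMapRight N f (QuotientAddGroup.mk y)
      = QuotientAddGroup.mk (TensorProduct.map (LinearMap.id : N →ₗ[ℤ] N)
          (f.restrictScalars ℤ) y) := rfl

variable (R)

/-- The functor `K ↦ N ⊗_R K` from left `R`-modules to abelian groups, for a fixed
right `R`-module `N`. -/
def tensorFunctor (N : Type u) [AddCommGroup N] [Module Rᵐᵒᵖ N] :
    ModuleCat.{u} R ⥤ AddCommGrpCat.{u} where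
  obj K := AddCommGrpCat.of (RTensor R N K)
  map {K K'} f := AddCommGrpCat.ofHom (balMapRight N f.hom)
  map_id K := by
    refine AddCommGrpCat.ext fun x => ?_
    refine QuotientAddGroup.induction_on x fun y => ?_
    show balMapRight N (𝟙 K : K ⟶ K).hom (QuotientAddGroup.mk y) = QuotientAddGroup.mk y
    rw [ModuleCat.hom_id, balMapRight_mk]
    congr 1
    refine TensorProduct.induction_on y (by simp) (fun a b => by simp) ?_
    intro s t hs ht
    simp_all [map_add]
  map_comp {K K' K''} f g := by
    refine AddCommGrpCat.ext fun x => ?_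
    refine QuotientAddGroup.induction_on x fun y => ?_
    show balMapRight N (f ≫ g).hom (QuotientAddGroup.mk y)
      = balMapRight N g.hom (balMapRight N f.hom (QuotientAddGroup.mk y))
    rw [ModuleCat.hom_comp, balMapRight_mk, balMapRight_mk, balMapRight_mk]
    congr 1
    refine TensorProduct.induction_on y (by simp) (fun a b => by simp) ?_
    intro s t hs ht
    simp_all [map_add]

instance (N : Type u) [AddCommGroup N] [Module Rᵐᵒᵖ N] : (tensorFunctor R N).Additive where
  map_add {K K'} {f g} := by
    refine AddCommGrpCat.ext fun x => ?_
    refine QuotientAddGroup.induction_on x fun y => ?_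
    show balMapRight N (f + g).hom (QuotientAddGroup.mk y)
      = balMapRight N f.hom (QuotientAddGroup.mk y) + balMapRight N g.hom (QuotientAddGroup.mk y)
    rw [ModuleCat.hom_add, balMapRight_mk, balMapRight_mk, balMapRight_mk]
    erw [← QuotientAddGroup.mk_add]
    congr 1
    refine TensorProduct.induction_on y (by simp)
      (fun a b => by
        simp only [TensorProduct.map_tmul, LinearMap.coe_restrictScalars, LinearMap.id_coe, id_eq]
        rw [show (f.hom + g.hom) b = f.hom b + g.hom b from rfl, TensorProduct.tmul_add]) ?_
    intro s t hs ht
    simp_all [map_add]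
    abel

/-- Vanishing of `Tor_i^R(N, K)` for a right `R`-module `N` and a left `R`-module `K`:
the `i`-th left derived functor of `N ⊗_R -` vanishes at `K`. -/
def torVanish (i : ℕ) (N : Type u) [AddCommGroup N] [Module Rᵐᵒᵖ N]
    (K : Type u) [AddCommGroup K] [Module R K] : Prop :=
  Subsingleton (((tensorFunctor R N).leftDerived i).obj (ModuleCat.of R K))

/-- A right `R`-module `N` is *`n`-weak flat* if `Tor^R_{n+1}(N, U) = 0` for every
`n`-super finitely presented left `R`-module `U`. -/
def IsNWeakFlat (n : ℕ) (N : Type u) [AddCommGroup N] [Module Rᵐᵒᵖ N] : Prop :=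
  ∀ (U : ModuleCat.{u} R), IsNSuperFP R n U → torVanish R (n + 1) N U

/-- The right `R`-module `N` has *`n`-weak flat dimension at most `k`* if
`Tor^R_{k+1}(N, K) = 0` for every special super finitely presented left `R`-module
`K`. -/
def WFDimLE (n k : ℕ) (N : Type u) [AddCommGroup N] [Module Rᵐᵒᵖ N] : Prop :=
  ∀ (K : ModuleCat.{u} R), IsSpecialSFP R n K → torVanish R (k + 1) N K

/-! ### Character modules -/

/-- The character module `M⋆ = Hom_ℤ(M, ℚ/ℤ)` of a left `R`-module is a right
`R`-module via `(f · r) (m) = f (r · m)`. -/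
instance charModuleRight (M : Type u) [AddCommGroup M] [Module R M] :
    Module Rᵐᵒᵖ (CharacterModule M) where
  smul ρ f := f.comp (DistribMulAction.toAddMonoidHom M ρ.unop)
  one_smul f := CharacterModule.ext _ fun m => congrArg f (one_smul R m)
  mul_smul ρ σ f := CharacterModule.ext _ fun m => congrArg f (mul_smul σ.unop ρ.unop m)
  smul_zero ρ := CharacterModule.ext _ fun _ => rfl
  smul_add ρ f g := CharacterModule.ext _ fun _ => rfl
  add_smul ρ σ f := CharacterModule.ext _ fun m => by
    show f ((ρ.unop + σ.unop) • m) = f (ρ.unop • m) + f (σ.unop • m)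
    rw [add_smul, map_add]
  zero_smul f := CharacterModule.ext _ fun m => by
    show f ((0 : R) • m) = 0
    rw [zero_smul, map_zero]

/-- The character module `N⋆ = Hom_ℤ(N, ℚ/ℤ)` of a right `R`-module is a left
`R`-module via `(r · f) (m) = f (m · r)`. -/
instance charModuleLeft (N : Type u) [AddCommGroup N] [Module Rᵐᵒᵖ N] :
    Module R (CharacterModule N) where
  smul r f := f.comp (DistribMulAction.toAddMonoidHom N (MulOpposite.op r))
  one_smul f := CharacterModule.ext _ fun m => congrArg f (one_smul Rᵐᵒᵖ m)
  mul_smul r s f := CharacterModule.ext _ fun m => congrArg f (by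
    show (MulOpposite.op (r * s)) • m = (MulOpposite.op s) • (MulOpposite.op r) • m
    rw [← mul_smul, MulOpposite.op_mul])
  smul_zero r := CharacterModule.ext _ fun _ => rfl
  smul_add r f g := CharacterModule.ext _ fun _ => rfl
  add_smul r s f := CharacterModule.ext _ fun m => by
    show f ((MulOpposite.op r + MulOpposite.op s) • m)
      = f ((MulOpposite.op r) • m) + f ((MulOpposite.op s) • m)
    rw [add_smul, map_add]
  zero_smul f := CharacterModule.ext _ fun m => by
    show f ((0 : Rᵐᵒᵖ) • m) = 0
    rw [zero_smul, map_zero]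

/-! ### Purity and flatness -/

/-- A submodule `N` of a left `R`-module `M` is *pure* if for every right `R`-module
`L` the induced map `L ⊗_R N → L ⊗_R M` is injective. -/
def IsPureSubmodule (M : Type u) [AddCommGroup M] [Module R M] (N : Submodule R M) :
    Prop :=
  ∀ (L : Type u) [AddCommGroup L] [Module Rᵐᵒᵖ L],
    Function.Injective (balMapRight L N.subtype)

/-- A submodule `N` of a right `R`-module `M` is *pure* if for every left `R`-module
`L` the induced map `N ⊗_R L → M ⊗_R L` is injective. -/
def IsPureSubmoduleRight (M : Type u) [AddCommGroup M] [Module Rᵐᵒᵖ M]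
    (N : Submodule Rᵐᵒᵖ M) : Prop :=
  ∀ (L : Type u) [AddCommGroup L] [Module R L],
    Function.Injective (balMapLeft L N.subtype)

/-- A left `R`-module `M` is *flat* if tensoring with `M` preserves injectivity of
maps of right `R`-modules. -/
def IsFlatLeft (M : Type u) [AddCommGroup M] [Module R M] : Prop :=
  ∀ (A B : Type u) [AddCommGroup A] [Module Rᵐᵒᵖ A] [AddCommGroup B] [Module Rᵐᵒᵖ B]
    (g : A →ₗ[Rᵐᵒᵖ] B), Function.Injective g → Function.Injective (balMapLeft M g)

/-- The left `R`-module `K` has *projective dimension at most `m`*: there is an exact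
sequence `0 → P_m → ⋯ → P_1 → P_0 → K → 0` with all `P_i` projective (encoded by a
projective resolution vanishing in degrees `> m`). -/
def ProjDimLE (K : Type u) [AddCommGroup K] [Module R K] (m : ℕ) : Prop :=
  ∃ (P : ℕ → ModuleCat.{u} R) (d : ∀ i, P (i + 1) ⟶ P i) (ε : P 0 →ₗ[R] K),
    (∀ i, Module.Projective R (P i)) ∧
    Function.Surjective ε ∧
    Function.Exact (d 0) ε ∧
    (∀ i, Function.Exact (d (i + 1)) (d i)) ∧
    (∀ i, m < i → Subsingleton (P i))

end NWeak

/-! Let `P → U` be a projective resolution. The adjunction `Hom_R(P_i, M⋆) ≃ (M ⊗_R P_i)⋆`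
identifies the complex `Hom_R(P, M⋆)` computing `Ext_R^•(U, M⋆)` with the character dual of
the complex `M ⊗_R P` computing `Tor^R_•(M, U)`. As `ℚ/ℤ` is an injective cogenerator of
abelian groups, taking characters preserves and reflects exactness, so `Tor^R_{i+1}(M, U) = 0`
iff `Ext_R^{i+1}(U, M⋆) = 0` for every left module `U`. -/

namespace CharacterModule

variable {R : Type*} [CommRing R] {A B C : Type*} [AddCommGroup A] [Module R A]
  [AddCommGroup B] [Module R B] [AddCommGroup C] [Module R C]

lemma mem_range_dual_iff (g : B →ₗ[R] C) (c : CharacterModule B) :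
    c ∈ Set.range (dual g) ↔ ∀ b, g b = 0 → c b = 0 := by
  constructor
  · rintro ⟨c', rfl⟩ b hb
    show c' (g b) = 0
    rw [hb, map_zero]
  · intro hc
    let g' := g.toAddMonoidHom
    let cbar : CharacterModule (B ⧸ g'.ker) := QuotientAddGroup.lift _ c hc
    obtain ⟨c', hc'⟩ := dual_surjective_of_injective
      (QuotientAddGroup.kerLift g').toIntLinearMap (QuotientAddGroup.kerLift_injective g') cbar
    exact ⟨c', ext _ fun b => DFunLike.congr_fun hc' (b : B ⧸ g'.ker)⟩

lemma mem_of_forall_character_apply_eq_zero {S : AddSubgroup B} {b : B}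
    (h : ∀ c : CharacterModule B, (∀ s ∈ S, c s = 0) → c b = 0) : b ∈ S := by
  by_contra hb
  obtain ⟨χ, hχ⟩ := exists_character_apply_ne_zero_of_ne_zero
    (mt (QuotientAddGroup.eq_zero_iff b).mp hb)
  exact hχ <| h (χ.comp (QuotientAddGroup.mk' S)) fun s hs =>
    (congrArg χ ((QuotientAddGroup.eq_zero_iff s).mpr hs)).trans (map_zero χ)

lemma exact_dual_iff {f : A →ₗ[R] B} {g : B →ₗ[R] C} :
    Function.Exact (dual g) (dual f) ↔ Function.Exact f g := by
  have dual_f_eq_zero (c : CharacterModule B) : dual f c = 0 ↔ ∀ a, c (f a) = 0 :=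
    ⟨fun h a => DFunLike.congr_fun h a, fun h => DFunLike.ext _ _ h⟩
  constructor
  · intro h b
    constructor
    · intro hb
      refine mem_of_forall_character_apply_eq_zero (S := (LinearMap.range f).toAddSubgroup)
        fun c hc => ?_
      obtain ⟨c', rfl⟩ := (h c).mp <| (dual_f_eq_zero c).mpr fun a => hc _ ⟨a, rfl⟩
      exact (mem_range_dual_iff g _).mp ⟨c', rfl⟩ b hb
    · rintro ⟨a, rfl⟩
      refine eq_zero_of_character_apply fun c => ?_
      exact DFunLike.congr_fun ((h (dual g c)).mpr ⟨c, rfl⟩) a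
  · intro h c
    rw [dual_f_eq_zero, mem_range_dual_iff]
    refine ⟨fun hc b hb => ?_, fun hc a => hc _ (h.apply_apply_eq_zero a)⟩
    obtain ⟨a, rfl⟩ := (h b).mp hb
    exact hc a

end CharacterModule

namespace NWeak

variable {R : Type u} [Ring R] {M : Type u} [AddCommGroup M] [Module Rᵐᵒᵖ M]

variable (R) in
def RTensor.tmul (K : Type u) [AddCommGroup K] [Module R K] : M →+ K →+ RTensor R M K :=
  (AddMonoidHom.compHom (QuotientAddGroup.mk' _)).comp
    (LinearMap.toAddMonoidHom'.comp (TensorProduct.mk ℤ M K).toAddMonoidHom)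

lemma RTensor.tmul_smul {K : Type u} [AddCommGroup K] [Module R K] (a : M) (r : R) (b : K) :
    RTensor.tmul R K a (r • b) = RTensor.tmul R K (MulOpposite.op r • a) b :=
  (QuotientAddGroup.eq_iff_sub_mem.mpr
    (AddSubgroup.subset_closure ⟨a, r, b, rfl⟩ : _ ∈ balRel R M K)).symm

lemma RTensor.addMonoidHom_ext {K : Type u} {P : Type*} [AddCommGroup K] [Module R K]
    [AddCommGroup P] {φ ψ : RTensor R M K →+ P}
    (h : ∀ a b, φ (RTensor.tmul R K a b) = ψ (RTensor.tmul R K a b)) : φ = ψ := by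
  refine QuotientAddGroup.addMonoidHom_ext _ (AddMonoidHom.ext fun y => ?_)
  induction y using TensorProduct.induction_on with
  | zero => simp
  | tmul a b => exact h a b
  | add x y hx hy => simp_all

def homCharacterModuleEquiv (K : Type u) [AddCommGroup K] [Module R K] :
    (K →ₗ[R] CharacterModule M) ≃+ CharacterModule (RTensor R M K) where
  toFun φ := QuotientAddGroup.lift _
    (TensorProduct.liftAddHom (AddMonoidHom.flip φ.toAddMonoidHom) fun z a b => by simp)
    (by
      rw [balRel, AddSubgroup.closure_le]
      rintro _ ⟨a, r, b, rfl⟩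
      rw [SetLike.mem_coe, AddMonoidHom.mem_ker, map_sub, liftAddHom_tmul, liftAddHom_tmul]
      show φ b (MulOpposite.op r • a) - φ (r • b) a = 0
      rw [map_smul φ]
      exact sub_self _)
  invFun c :=
    { toFun b := c.comp ((RTensor.tmul R K).flip b)
      map_add' b b' := by
        rw [map_add]
        exact AddMonoidHom.comp_add (c : RTensor R M K →+ AddCircle (1 : ℚ)) _ _
      map_smul' r b := CharacterModule.ext _ fun a => congrArg c (RTensor.tmul_smul a r b) }
  left_inv φ := rfl
  right_inv c := RTensor.addMonoidHom_ext fun a b => rfl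
  map_add' φ ψ := RTensor.addMonoidHom_ext fun a b => rfl

lemma homCharacterModuleEquiv_comp {K K' : Type u} [AddCommGroup K] [Module R K]
    [AddCommGroup K'] [Module R K'] (f : K →ₗ[R] K') (φ : K' →ₗ[R] CharacterModule M) :
    homCharacterModuleEquiv K (φ ∘ₗ f) =
      (homCharacterModuleEquiv K' φ : RTensor R M K' →+ AddCircle (1 : ℚ)).comp
        (balMapRight M f) :=
  RTensor.addMonoidHom_ext fun _ _ => rfl

lemma exactAt_linearYonedaObj_characterModule_iff (P : ChainComplex (ModuleCat.{u} R) ℕ)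
    (i : ℕ) :
    (P.linearYonedaObj ℤ (ModuleCat.of R (CharacterModule M))).ExactAt (i + 1) ↔
      (((tensorFunctor R M).mapHomologicalComplex _).obj P).ExactAt (i + 1) := by
  set D := P.linearYonedaObj ℤ (ModuleCat.of R (CharacterModule M))
  set C := ((tensorFunctor R M).mapHomologicalComplex _).obj P
  rw [D.exactAt_iff' i (i + 1) (i + 2) (by simp) (by simp),
    C.exactAt_iff' (i + 2) (i + 1) i (by simp) (by simp),
    ShortComplex.ab_exact_iff_function_exact, ShortComplex.moduleCat_exact_iff_range_eq_ker,
    eq_comm, ← LinearMap.exact_iff]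
  refine Iff.trans ?_ (CharacterModule.exact_dual_iff
    (f := (C.d (i + 2) (i + 1)).hom.toIntLinearMap) (g := (C.d (i + 1) i).hom.toIntLinearMap))
  let δ (j : ℕ) := CharacterModule.dual (C.d (j + 1) j).hom.toIntLinearMap
  let e (j : ℕ) : D.X j ≃+ CharacterModule (C.X j) :=
    (ModuleCat.homAddEquiv (M := P.X j) (N := .of R (CharacterModule M))).trans
      (homCharacterModuleEquiv (P.X j))
  exact (Function.Exact.iff_of_ladder_addEquiv (e i) (e (i + 1)) (e (i + 2))
    (f₁₂ := (D.d i (i + 1)).hom.toAddMonoidHom)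
    (f₂₃ := (D.d (i + 1) (i + 2)).hom.toAddMonoidHom)
    (g₁₂ := (δ i).toAddMonoidHom) (g₂₃ := (δ (i + 1)).toAddMonoidHom)
    (AddMonoidHom.ext fun φ => (homCharacterModuleEquiv_comp _ φ.hom).symm)
    (AddMonoidHom.ext fun φ => (homCharacterModuleEquiv_comp _ φ.hom).symm)).symm

lemma torVanish_iff_exactAt {U : ModuleCat.{u} R} (P : ProjectiveResolution U) (i : ℕ) :
    torVanish R i M U ↔
      (((tensorFunctor R M).mapHomologicalComplex _).obj P.complex).ExactAt i := by
  rw [torVanish, ← AddCommGrpCat.isZero_iff_subsingleton, (P.isoLeftDerivedObj _ i).isZero_iff,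
    HomologicalComplex.exactAt_iff_isZero_homology]
  rfl

lemma extVanish_iff_exactAt {U : ModuleCat.{u} R} (P : ProjectiveResolution U) (i : ℕ)
    (Y : Type u) [AddCommGroup Y] [Module R Y] :
    extVanish R i U Y ↔ (P.complex.linearYonedaObj ℤ (ModuleCat.of R Y)).ExactAt i := by
  rw [extVanish, ← ModuleCat.isZero_iff_subsingleton, (P.isoExt i _).isZero_iff,
    HomologicalComplex.exactAt_iff_isZero_homology]

lemma torVanish_succ_iff_extVanish_succ_characterModule (U : ModuleCat.{u} R) (i : ℕ) :
    torVanish R (i + 1) M U ↔ extVanish R (i + 1) U (CharacterModule M) := by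
  obtain ⟨P⟩ := HasProjectiveResolution.out (Z := U)
  rw [torVanish_iff_exactAt P, extVanish_iff_exactAt P,
    exactAt_linearYonedaObj_characterModule_iff]

end NWeak

open NWeak in
/-- A right `R`-module `M` is `n`-weak flat if and only if its character
module `M⋆ = Hom_ℤ(M, ℚ/ℤ)` is an `n`-weak injective left `R`-module. -/
theorem isNWeakFlat_iff_isNWeakInjective_characterModule
    (R : Type u) [Ring R] (n : ℕ) (M : Type u) [AddCommGroup M] [Module Rᵐᵒᵖ M] :
    IsNWeakFlat R n M ↔ IsNWeakInjective R n (CharacterModule M) :=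
  forall₂_congr fun U _ => torVanish_succ_iff_extVanish_succ_characterModule U n
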